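/- arXiv:1312.5427 — 4 statements merged into one kernel-verified Lean document; each statement's English description precedes it below -/
import Mathlib

section
/- Let T > 0, let q : ℂ × [0, T] → ℝ be smooth in the spatial variable and C¹ in time with values in smooth functions, and let u : ℂ × [0, T] → ℂ be smooth with ∂̄u = ∂q. For each time τ, define operators acting on smooth functions φ : ℂ → ℂ by Lφ = ∂∂̄φ − (q/4)φ, Aφ = ∂³φ + ∂̄³φ − (3/4)(u·∂φ + conj(u)·∂̄φ), and Bφ = (3/4)(∂u + ∂̄(conj u))·φ. Then q is a classical solution of the Novikov–Veselov equation q_τ = 2 Re(∂³q − (3/4)∂(uq)) on ℂ × [0, T] if and only if for every τ ∈ [0, T] and every smooth φ : ℂ → ℂ the Manakov triple identity (dL/dτ)φ = (AL − LA)φ − B(Lφ) holds pointwise, where (dL/dτ)φ = −(q_τ/4)φ. -/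
/-- Partial derivative in the `x`-direction of a function on `ℂ`. -/
noncomputable def Wx (g : ℂ → ℂ) : ℂ → ℂ :=
  fun z => deriv (fun x : ℝ => g (x + z.im * Complex.I)) z.re

/-- Partial derivative in the `y`-direction of a function on `ℂ`. -/
noncomputable def Wy (g : ℂ → ℂ) : ℂ → ℂ :=
  fun z => deriv (fun y : ℝ => g (z.re + y * Complex.I)) z.im

/-- Wirtinger derivative `∂ = (1/2)(∂ₓ − i∂_y)`. -/
noncomputable def Wdz (g : ℂ → ℂ) : ℂ → ℂ :=
  fun z => (1/2) * (Wx g z - Complex.I * Wy g z)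

/-- Wirtinger derivative `∂̄ = (1/2)(∂ₓ + i∂_y)`. -/
noncomputable def Wdzbar (g : ℂ → ℂ) : ℂ → ℂ :=
  fun z => (1/2) * (Wx g z + Complex.I * Wy g z)

/-- The Schrödinger operator `Lφ = ∂∂̄φ − (q/4)φ` at time `τ`. -/
noncomputable def Lop (q : ℂ → ℝ → ℝ) (τ : ℝ) (φ : ℂ → ℂ) : ℂ → ℂ :=
  fun z => Wdz (Wdzbar φ) z - (((q z τ : ℝ) : ℂ) / 4) * φ z

/-- The operator `Aφ = ∂³φ + ∂̄³φ − (3/4)(u·∂φ + conj(u)·∂̄φ)` at time `τ`. -/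
noncomputable def Aop (u : ℂ → ℝ → ℂ) (τ : ℝ) (φ : ℂ → ℂ) : ℂ → ℂ :=
  fun z => Wdz (Wdz (Wdz φ)) z + Wdzbar (Wdzbar (Wdzbar φ)) z
    - (3/4) * (u z τ * Wdz φ z + (starRingEnd ℂ) (u z τ) * Wdzbar φ z)

/-- The multiplication operator `Bφ = (3/4)(∂u + ∂̄(conj u))·φ` at time `τ`. -/
noncomputable def Bop (u : ℂ → ℝ → ℂ) (τ : ℝ) (φ : ℂ → ℂ) : ℂ → ℂ :=
  fun z => (3/4) * (Wdz (fun w => u w τ) z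
    + Wdzbar (fun w => (starRingEnd ℂ) (u w τ)) z) * φ z

open Complex

lemma Wx_eq {g : ℂ → ℂ} {z : ℂ} (hg : DifferentiableAt ℝ g z) :
    Wx g z = fderiv ℝ g z 1 := by
  have h1 : HasDerivAt (fun x : ℝ => (x : ℂ) + z.im * Complex.I) 1 z.re := by
    simpa using (Complex.ofRealCLM.hasDerivAt (x := z.re)).add_const ((z.im : ℂ) * Complex.I)
  have h2 : HasFDerivAt g (fderiv ℝ g z) ((z.re : ℂ) + z.im * Complex.I) := by
    rw [Complex.re_add_im]; exact hg.hasFDerivAt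
  have h3 := h2.comp_hasDerivAt z.re h1
  simpa [Wx, Function.comp_def] using h3.deriv

lemma Wy_eq {g : ℂ → ℂ} {z : ℂ} (hg : DifferentiableAt ℝ g z) :
    Wy g z = fderiv ℝ g z Complex.I := by
  have h1 : HasDerivAt (fun y : ℝ => (z.re : ℂ) + y * Complex.I) Complex.I z.im := by
    simpa using ((Complex.ofRealCLM.hasDerivAt (x := z.im)).mul_const Complex.I).const_add (z.re : ℂ)
  have h2 : HasFDerivAt g (fderiv ℝ g z) ((z.re : ℂ) + z.im * Complex.I) := by
    rw [Complex.re_add_im]; exact hg.hasFDerivAt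
  have h3 := h2.comp_hasDerivAt z.im h1
  simpa [Wy, Function.comp_def] using h3.deriv

lemma Wdz_eq {g : ℂ → ℂ} {z : ℂ} (hg : DifferentiableAt ℝ g z) :
    Wdz g z = (1/2) * (fderiv ℝ g z 1 - Complex.I * fderiv ℝ g z Complex.I) := by
  rw [Wdz, Wx_eq hg, Wy_eq hg]

lemma Wdzbar_eq {g : ℂ → ℂ} {z : ℂ} (hg : DifferentiableAt ℝ g z) :
    Wdzbar g z = (1/2) * (fderiv ℝ g z 1 + Complex.I * fderiv ℝ g z Complex.I) := by
  rw [Wdzbar, Wx_eq hg, Wy_eq hg]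

local notation "C∞" => ContDiff ℝ (⊤ : ℕ∞)

lemma contDiff_fderiv_apply {g : ℂ → ℂ} (hg : C∞ g) (v : ℂ) :
    C∞ (fun z => fderiv ℝ g z v) :=
  (hg.fderiv_right (by simp)).clm_apply contDiff_const

lemma Wdz_eqf {g : ℂ → ℂ} (hg : C∞ g) :
    Wdz g = fun z => (1/2) * (fderiv ℝ g z 1 - Complex.I * fderiv ℝ g z Complex.I) :=
  funext fun z => Wdz_eq (hg.differentiable (by simp) z)

lemma Wdzbar_eqf {g : ℂ → ℂ} (hg : C∞ g) :
    Wdzbar g = fun z => (1/2) * (fderiv ℝ g z 1 + Complex.I * fderiv ℝ g z Complex.I) :=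
  funext fun z => Wdzbar_eq (hg.differentiable (by simp) z)

@[fun_prop]
lemma contDiff_Wdz {g : ℂ → ℂ} (hg : C∞ g) : C∞ (Wdz g) := by
  rw [Wdz_eqf hg]
  exact (contDiff_const.mul ((contDiff_fderiv_apply hg 1).sub
    (contDiff_const.mul (contDiff_fderiv_apply hg Complex.I))))

@[fun_prop]
lemma contDiff_Wdzbar {g : ℂ → ℂ} (hg : C∞ g) : C∞ (Wdzbar g) := by
  rw [Wdzbar_eqf hg]
  exact (contDiff_const.mul ((contDiff_fderiv_apply hg 1).add
    (contDiff_const.mul (contDiff_fderiv_apply hg Complex.I))))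

lemma Wdz_add {f g : ℂ → ℂ} (hf : C∞ f) (hg : C∞ g) :
    Wdz (fun z => f z + g z) = fun z => Wdz f z + Wdz g z := by
  funext z
  have hfd := hf.differentiable (by simp) z
  have hgd := hg.differentiable (by simp) z
  rw [Wdz_eq (hfd.fun_add hgd), Wdz_eq hfd, Wdz_eq hgd, fderiv_fun_add hfd hgd]
  simp; ring

lemma Wdz_sub {f g : ℂ → ℂ} (hf : C∞ f) (hg : C∞ g) :
    Wdz (fun z => f z - g z) = fun z => Wdz f z - Wdz g z := by
  funext z
  have hfd := hf.differentiable (by simp) z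
  have hgd := hg.differentiable (by simp) z
  rw [Wdz_eq (hfd.fun_sub hgd), Wdz_eq hfd, Wdz_eq hgd, fderiv_fun_sub hfd hgd]
  simp; ring

lemma Wdz_const_mul (c : ℂ) {g : ℂ → ℂ} (hg : C∞ g) :
    Wdz (fun z => c * g z) = fun z => c * Wdz g z := by
  funext z
  have hgd := hg.differentiable (by simp) z
  rw [Wdz_eq (hgd.const_mul c), Wdz_eq hgd, fderiv_const_mul hgd c]
  simp; ring

lemma Wdz_mul {f g : ℂ → ℂ} (hf : C∞ f) (hg : C∞ g) :
    Wdz (fun z => f z * g z) = fun z => Wdz f z * g z + f z * Wdz g z := by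
  funext z
  have hfd := hf.differentiable (by simp) z
  have hgd := hg.differentiable (by simp) z
  rw [Wdz_eq (hfd.fun_mul hgd), Wdz_eq hfd, Wdz_eq hgd, fderiv_fun_mul hfd hgd]
  simp [smul_eq_mul]; ring

lemma Wdzbar_add {f g : ℂ → ℂ} (hf : C∞ f) (hg : C∞ g) :
    Wdzbar (fun z => f z + g z) = fun z => Wdzbar f z + Wdzbar g z := by
  funext z
  have hfd := hf.differentiable (by simp) z
  have hgd := hg.differentiable (by simp) z
  rw [Wdzbar_eq (hfd.fun_add hgd), Wdzbar_eq hfd, Wdzbar_eq hgd, fderiv_fun_add hfd hgd]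
  simp; ring

lemma Wdzbar_sub {f g : ℂ → ℂ} (hf : C∞ f) (hg : C∞ g) :
    Wdzbar (fun z => f z - g z) = fun z => Wdzbar f z - Wdzbar g z := by
  funext z
  have hfd := hf.differentiable (by simp) z
  have hgd := hg.differentiable (by simp) z
  rw [Wdzbar_eq (hfd.fun_sub hgd), Wdzbar_eq hfd, Wdzbar_eq hgd, fderiv_fun_sub hfd hgd]
  simp; ring

lemma Wdzbar_const_mul (c : ℂ) {g : ℂ → ℂ} (hg : C∞ g) :
    Wdzbar (fun z => c * g z) = fun z => c * Wdzbar g z := by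
  funext z
  have hgd := hg.differentiable (by simp) z
  rw [Wdzbar_eq (hgd.const_mul c), Wdzbar_eq hgd, fderiv_const_mul hgd c]
  simp; ring

lemma Wdzbar_mul {f g : ℂ → ℂ} (hf : C∞ f) (hg : C∞ g) :
    Wdzbar (fun z => f z * g z) = fun z => Wdzbar f z * g z + f z * Wdzbar g z := by
  funext z
  have hfd := hf.differentiable (by simp) z
  have hgd := hg.differentiable (by simp) z
  rw [Wdzbar_eq (hfd.fun_mul hgd), Wdzbar_eq hfd, Wdzbar_eq hgd, fderiv_fun_mul hfd hgd]
  simp [smul_eq_mul]; ring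

lemma fderiv_swap {g : ℂ → ℂ} (hg : C∞ g) (z v w : ℂ) :
    fderiv ℝ (fun x => fderiv ℝ g x v) z w = fderiv ℝ (fun x => fderiv ℝ g x w) z v := by
  have hsymm : IsSymmSndFDerivAt ℝ g z :=
    (hg.contDiffAt).isSymmSndFDerivAt ((by rw [minSmoothness_of_isRCLikeNormedField]; exact WithTop.coe_le_coe.mpr (le_top : (2 : ℕ∞) ≤ ⊤)))
  have hd : DifferentiableAt ℝ (fderiv ℝ g) z :=
    ((hg.fderiv_right (m := (⊤ : ℕ∞)) (by simp)).differentiable (by simp)) z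
  have h1 : ∀ a : ℂ, fderiv ℝ (fun x => fderiv ℝ g x a) z
      = (fderiv ℝ (fderiv ℝ g) z).flip a := by
    intro a
    have := fderiv_clm_apply (𝕜 := ℝ) (c := fderiv ℝ g) (u := fun _ => a) hd
      (differentiableAt_const a)
    simpa using this
  rw [h1 v, h1 w]
  exact hsymm w v

lemma Wdz_Wdzbar_comm {g : ℂ → ℂ} (hg : C∞ g) :
    Wdz (Wdzbar g) = Wdzbar (Wdz g) := by
  funext z
  have hD : ∀ a : ℂ, C∞ (fun x => fderiv ℝ g x a) := contDiff_fderiv_apply hg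
  have hda : ∀ a : ℂ, DifferentiableAt ℝ (fun x => fderiv ℝ g x a) z :=
    fun a => ((hD a).differentiable (by simp)) z
  have e1 : ∀ a : ℂ, fderiv ℝ (Wdzbar g) z a
      = (1/2) * (fderiv ℝ (fun x => fderiv ℝ g x 1) z a
          + Complex.I * fderiv ℝ (fun x => fderiv ℝ g x Complex.I) z a) := by
    intro a
    rw [Wdzbar_eqf hg]
    rw [fderiv_const_mul (((hda 1).fun_add ((hda Complex.I).const_mul Complex.I))) ((1:ℂ)/2),
      fderiv_fun_add (hda 1) ((hda Complex.I).const_mul Complex.I),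
      fderiv_const_mul (hda Complex.I) Complex.I]
    simp [smul_eq_mul]; ring
  have e2 : ∀ a : ℂ, fderiv ℝ (Wdz g) z a
      = (1/2) * (fderiv ℝ (fun x => fderiv ℝ g x 1) z a
          - Complex.I * fderiv ℝ (fun x => fderiv ℝ g x Complex.I) z a) := by
    intro a
    rw [Wdz_eqf hg]
    rw [fderiv_const_mul (((hda 1).fun_sub ((hda Complex.I).const_mul Complex.I))) ((1:ℂ)/2),
      fderiv_fun_sub (hda 1) ((hda Complex.I).const_mul Complex.I),
      fderiv_const_mul (hda Complex.I) Complex.I]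
    simp [smul_eq_mul]
  rw [Wdz_eq ((contDiff_Wdzbar hg).differentiable (by simp) z),
    Wdzbar_eq ((contDiff_Wdz hg).differentiable (by simp) z), e1 1, e1 Complex.I, e2 1, e2 Complex.I,
    fderiv_swap hg z Complex.I 1]
  ring

@[fun_prop]
lemma contDiff_conjf {g : ℂ → ℂ} (hg : C∞ g) : C∞ (fun z => (starRingEnd ℂ) (g z)) :=
  Complex.conjCLE.contDiff.comp hg

lemma fderiv_conj_apply {g : ℂ → ℂ} {z v : ℂ} (hd : DifferentiableAt ℝ g z) :
    fderiv ℝ (fun w => (starRingEnd ℂ) (g w)) z v = (starRingEnd ℂ) (fderiv ℝ g z v) := by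
  have h : HasFDerivAt (fun w => (starRingEnd ℂ) (g w))
      ((Complex.conjCLE : ℂ →L[ℝ] ℂ).comp (fderiv ℝ g z)) z :=
    (Complex.conjCLE.hasFDerivAt).comp z hd.hasFDerivAt
  rw [h.fderiv]; rfl

lemma Wdzbar_conj {g : ℂ → ℂ} (hg : C∞ g) :
    Wdzbar (fun z => (starRingEnd ℂ) (g z)) = fun z => (starRingEnd ℂ) (Wdz g z) := by
  funext z
  have hd := hg.differentiable (by simp) z
  rw [Wdzbar_eq (((contDiff_conjf hg).differentiable (by simp)) z),
    Wdz_eq hd, fderiv_conj_apply hd, fderiv_conj_apply hd]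
  rw [map_mul, map_sub, map_mul]
  simp [Complex.conj_I, map_ofNat]


lemma Wdz_conj {g : ℂ → ℂ} (hg : C∞ g) :
    Wdz (fun z => (starRingEnd ℂ) (g z)) = fun z => (starRingEnd ℂ) (Wdzbar g z) := by
  funext z
  have hd := hg.differentiable (by simp) z
  rw [Wdz_eq (((contDiff_conjf hg).differentiable (by simp)) z),
    Wdzbar_eq hd, fderiv_conj_apply hd, fderiv_conj_apply hd]
  rw [map_mul, map_add, map_mul]
  simp [Complex.conj_I, map_ofNat]
  ring

@[fun_prop]
lemma myContDiff_div_const {f : ℂ → ℂ} (c : ℂ) (hf : C∞ f) : C∞ (fun w => f w / c) :=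
  hf.div_const c

lemma Wdz_div_const {f : ℂ → ℂ} (hf : C∞ f) (c : ℂ) :
    Wdz (fun z => f z / c) = fun z => Wdz f z / c := by
  simp only [div_eq_mul_inv]
  rw [show (fun z => f z * c⁻¹) = fun z => c⁻¹ * f z from funext fun z => mul_comm _ _,
    Wdz_const_mul c⁻¹ hf]
  funext z; ring

lemma Wdzbar_div_const {f : ℂ → ℂ} (hf : C∞ f) (c : ℂ) :
    Wdzbar (fun z => f z / c) = fun z => Wdzbar f z / c := by
  simp only [div_eq_mul_inv]
  rw [show (fun z => f z * c⁻¹) = fun z => c⁻¹ * f z from funext fun z => mul_comm _ _,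
    Wdzbar_const_mul c⁻¹ hf]
  funext z; ring

lemma Wdz_const (c : ℂ) : Wdz (fun _ => c) = fun _ => 0 := by
  funext z
  rw [Wdz_eq (differentiableAt_const c), fderiv_fun_const]
  simp

lemma Wdzbar_const (c : ℂ) : Wdzbar (fun _ => c) = fun _ => 0 := by
  funext z
  rw [Wdzbar_eq (differentiableAt_const c), fderiv_fun_const]
  simp


lemma key (r u v φ : ℂ → ℂ) (hr : C∞ r) (hu : C∞ u) (hv : C∞ v) (hφ : C∞ φ)
    (hur : Wdzbar u = Wdz r) (hvr : Wdz v = Wdzbar r) (z : ℂ) :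
    (Wdz (Wdz (Wdz (fun w => Wdz (Wdzbar φ) w - r w / 4 * φ w))) z
      + Wdzbar (Wdzbar (Wdzbar (fun w => Wdz (Wdzbar φ) w - r w / 4 * φ w))) z
      - 3/4 * (u z * Wdz (fun w => Wdz (Wdzbar φ) w - r w / 4 * φ w) z
          + v z * Wdzbar (fun w => Wdz (Wdzbar φ) w - r w / 4 * φ w) z))
    - (Wdz (Wdzbar (fun w => Wdz (Wdz (Wdz φ)) w + Wdzbar (Wdzbar (Wdzbar φ)) w
          - 3/4 * (u w * Wdz φ w + v w * Wdzbar φ w))) z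
        - r z / 4 * (Wdz (Wdz (Wdz φ)) z + Wdzbar (Wdzbar (Wdzbar φ)) z
          - 3/4 * (u z * Wdz φ z + v z * Wdzbar φ z)))
    - 3/4 * (Wdz u z + Wdzbar v z)
        * (Wdz (Wdzbar φ) z - r z / 4 * φ z)
    = (-(1/4) * (Wdz (Wdz (Wdz r)) z + Wdzbar (Wdzbar (Wdzbar r)) z)
        + (3/16) * (Wdz (fun w => u w * r w) z + Wdzbar (fun w => v w * r w) z)) * φ z := by
  have hur' : Wdzbar (Wdz u) = Wdz (Wdz r) := by
    rw [← Wdz_Wdzbar_comm hu, hur]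
  have hvr' : Wdzbar (Wdz v) = Wdzbar (Wdzbar r) := by
    rw [hvr]
  simp (disch := fun_prop) only [Wdz_mul, Wdzbar_mul, Wdz_add, Wdzbar_add, Wdz_sub, Wdzbar_sub,
    Wdz_div_const, Wdzbar_div_const, Wdz_const, Wdzbar_const, Wdz_Wdzbar_comm, hur, hur', hvr, hvr']
  ring


/-- `q` is a classical solution of the Novikov–Veselov equation
`q_τ = 2 Re(∂³q − (3/4)∂(uq))` on `ℂ × [0,T]` if and only if the Manakov triple identity
`(dL/dτ)φ = (AL − LA)φ − B(Lφ)` holds for every time `τ ∈ [0,T]` and every smooth `φ`. -/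
theorem statement4 (T : ℝ) (hT : 0 < T) (q : ℂ → ℝ → ℝ) (u : ℂ → ℝ → ℂ)
    (hq_space : ∀ τ ∈ Set.Icc (0 : ℝ) T, ContDiff ℝ (⊤ : ℕ∞) (fun z => q z τ))
    (hq_time : ∀ z : ℂ, ContDiffOn ℝ 1 (fun τ => q z τ) (Set.Icc (0 : ℝ) T))
    (hu : ∀ τ ∈ Set.Icc (0 : ℝ) T, ContDiff ℝ (⊤ : ℕ∞) (fun z => u z τ))
    (haux : ∀ z : ℂ, ∀ τ ∈ Set.Icc (0 : ℝ) T,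
      Wdzbar (fun w => u w τ) z = Wdz (fun w => ((q w τ : ℝ) : ℂ)) z) :
    (∀ z : ℂ, ∀ τ ∈ Set.Icc (0 : ℝ) T,
        deriv (fun τ' => q z τ') τ
          = 2 * (Wdz (Wdz (Wdz (fun w => ((q w τ : ℝ) : ℂ)))) z
              - (3/4) * Wdz (fun w => u w τ * ((q w τ : ℝ) : ℂ)) z).re)
      ↔ (∀ τ ∈ Set.Icc (0 : ℝ) T, ∀ φ : ℂ → ℂ, ContDiff ℝ (⊤ : ℕ∞) φ → ∀ z : ℂ,
          -(((deriv (fun τ' => q z τ') τ : ℝ) : ℂ) / 4) * φ z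
            = Aop u τ (Lop q τ φ) z - Lop q τ (Aop u τ φ) z - Bop u τ (Lop q τ φ) z) := by
  -- Common setup, packaged as a helper claim
  have setup : ∀ τ ∈ Set.Icc (0 : ℝ) T, ∀ φ : ℂ → ℂ, ContDiff ℝ (⊤ : ℕ∞) φ → ∀ z : ℂ,
      Aop u τ (Lop q τ φ) z - Lop q τ (Aop u τ φ) z - Bop u τ (Lop q τ φ) z
        = (-(1/4) * (Wdz (Wdz (Wdz (fun w => ((q w τ : ℝ) : ℂ)))) z
              + Wdzbar (Wdzbar (Wdzbar (fun w => ((q w τ : ℝ) : ℂ)))) z)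
            + (3/16) * (Wdz (fun w => u w τ * ((q w τ : ℝ) : ℂ)) z
              + Wdzbar (fun w => (starRingEnd ℂ) (u w τ) * ((q w τ : ℝ) : ℂ)) z)) * φ z := by
    intro τ hτ φ hφ z
    have hr : C∞ (fun w => ((q w τ : ℝ) : ℂ)) :=
      Complex.ofRealCLM.contDiff.comp (hq_space τ hτ)
    have hu' : C∞ (fun w => u w τ) := hu τ hτ
    have hv' : C∞ (fun w => (starRingEnd ℂ) (u w τ)) := contDiff_conjf hu'
    have hur : Wdzbar (fun w => u w τ) = Wdz (fun w => ((q w τ : ℝ) : ℂ)) :=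
      funext fun z => haux z τ hτ
    have hrconj : (fun w => (starRingEnd ℂ) (((q w τ : ℝ) : ℂ)))
        = (fun w => ((q w τ : ℝ) : ℂ)) :=
      funext fun w => Complex.conj_ofReal _
    have hvr : Wdz (fun w => (starRingEnd ℂ) (u w τ))
        = Wdzbar (fun w => ((q w τ : ℝ) : ℂ)) := by
      rw [Wdz_conj hu', hur]
      conv_rhs => rw [← hrconj]
      rw [Wdzbar_conj hr]
    have hkey := key (fun w => ((q w τ : ℝ) : ℂ)) (fun w => u w τ)
      (fun w => (starRingEnd ℂ) (u w τ)) φ hr hu' hv' hφ hur hvr z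
    delta Lop Aop Bop
    simpa only using hkey
  -- conversion of the multiplier to the NV right-hand side
  have conv : ∀ τ ∈ Set.Icc (0 : ℝ) T, ∀ z : ℂ,
      (-(1/4) * (Wdz (Wdz (Wdz (fun w => ((q w τ : ℝ) : ℂ)))) z
            + Wdzbar (Wdzbar (Wdzbar (fun w => ((q w τ : ℝ) : ℂ)))) z)
          + (3/16) * (Wdz (fun w => u w τ * ((q w τ : ℝ) : ℂ)) z
            + Wdzbar (fun w => (starRingEnd ℂ) (u w τ) * ((q w τ : ℝ) : ℂ)) z))
        = -((((2 * (Wdz (Wdz (Wdz (fun w => ((q w τ : ℝ) : ℂ)))) z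
              - (3/4) * Wdz (fun w => u w τ * ((q w τ : ℝ) : ℂ)) z).re : ℝ)) : ℂ) / 4) := by
    intro τ hτ z
    have hr : C∞ (fun w => ((q w τ : ℝ) : ℂ)) :=
      Complex.ofRealCLM.contDiff.comp (hq_space τ hτ)
    have hu' : C∞ (fun w => u w τ) := hu τ hτ
    have hrconj : (fun w => (starRingEnd ℂ) (((q w τ : ℝ) : ℂ)))
        = (fun w => ((q w τ : ℝ) : ℂ)) :=
      funext fun w => Complex.conj_ofReal _
    have hb1 : Wdzbar (fun w => ((q w τ : ℝ) : ℂ))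
        = fun z => (starRingEnd ℂ) (Wdz (fun w => ((q w τ : ℝ) : ℂ)) z) := by
      conv_lhs => rw [← hrconj]
      exact Wdzbar_conj hr
    have hb2 : Wdzbar (Wdzbar (fun w => ((q w τ : ℝ) : ℂ)))
        = fun z => (starRingEnd ℂ) (Wdz (Wdz (fun w => ((q w τ : ℝ) : ℂ))) z) := by
      rw [hb1]
      exact Wdzbar_conj (contDiff_Wdz hr)
    have hb3 : Wdzbar (Wdzbar (Wdzbar (fun w => ((q w τ : ℝ) : ℂ))))
        = fun z => (starRingEnd ℂ) (Wdz (Wdz (Wdz (fun w => ((q w τ : ℝ) : ℂ)))) z) := by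
      rw [hb2]
      exact Wdzbar_conj (contDiff_Wdz (contDiff_Wdz hr))
    have hmulconj : (fun w => (starRingEnd ℂ) (u w τ) * ((q w τ : ℝ) : ℂ))
        = fun w => (starRingEnd ℂ) (u w τ * ((q w τ : ℝ) : ℂ)) := by
      funext w
      rw [map_mul, Complex.conj_ofReal]
    have h2 : Wdzbar (fun w => (starRingEnd ℂ) (u w τ) * ((q w τ : ℝ) : ℂ))
        = fun z => (starRingEnd ℂ) (Wdz (fun w => u w τ * ((q w τ : ℝ) : ℂ)) z) := by
      rw [hmulconj]
      exact Wdzbar_conj (hu'.mul hr)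
    have e3 := congrFun hb3 z
    have e2 := congrFun h2 z
    rw [e3, e2]
    have hcast : (((2 * (Wdz (Wdz (Wdz (fun w => ((q w τ : ℝ) : ℂ)))) z
          - (3/4) * Wdz (fun w => u w τ * ((q w τ : ℝ) : ℂ)) z).re : ℝ)) : ℂ)
        = (Wdz (Wdz (Wdz (fun w => ((q w τ : ℝ) : ℂ)))) z
            - (3/4) * Wdz (fun w => u w τ * ((q w τ : ℝ) : ℂ)) z)
          + (starRingEnd ℂ) (Wdz (Wdz (Wdz (fun w => ((q w τ : ℝ) : ℂ)))) z
            - (3/4) * Wdz (fun w => u w τ * ((q w τ : ℝ) : ℂ)) z) := by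
      rw [Complex.add_conj]

    rw [hcast, map_sub, map_mul]
    have : (starRingEnd ℂ) ((3:ℂ)/4) = (3:ℂ)/4 := by
      rw [map_div₀, map_ofNat, map_ofNat]
    rw [this]
    ring
  constructor
  · intro hNV τ hτ φ hφ z
    rw [setup τ hτ φ hφ z, conv τ hτ z, hNV z τ hτ]
  · intro h z τ hτ
    have h1 := h τ hτ (fun _ => 1) contDiff_const z
    rw [setup τ hτ (fun _ => 1) contDiff_const z, conv τ hτ z, mul_one, mul_one] at h1
    have h2 : ((deriv (fun τ' => q z τ') τ : ℝ) : ℂ)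
        = (((2 * (Wdz (Wdz (Wdz (fun w => ((q w τ : ℝ) : ℂ)))) z
            - (3/4) * Wdz (fun w => u w τ * ((q w τ : ℝ) : ℂ)) z).re : ℝ)) : ℂ) := by
      linear_combination -4 * h1
    exact_mod_cast h2
end

section
/- Let α ∈ ℝ with κ := cos(3α) ≠ 0, n₁ = cos α, n₂ = sin α, let c₁, c₂, E ∈ ℝ, and set β = −κE + c₁n₁ + c₂n₂. Suppose Q : ℝ × ℝ → ℝ is C¹ in time and C³ in space, and define q(t, x, y) = Q(t, n₁x + n₂y), u₁ = (n₁² − n₂²)q + c₁, u₂ = −2n₁n₂·q + c₂. Then q solves the Novikov–Veselov equation at energy E, namely 4q_t = −q_{xxx} + 3q_{xyy} + 3∂_x((q − E)u₁) + 3∂_y((q − E)u₂), if and only if Q(t, s) solves (4/κ)·Q_t = −Q_{sss} + 6Q·Q_s + (3β/κ)·Q_s. -/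
/-- Partial derivative in `t` for a real function `f(t, x, y)`. -/
noncomputable def dT (f : ℝ → ℝ → ℝ → ℝ) : ℝ → ℝ → ℝ → ℝ :=
  fun t x y => deriv (fun t' => f t' x y) t

/-- Partial derivative in `x` for a real function `f(t, x, y)`. -/
noncomputable def dX (f : ℝ → ℝ → ℝ → ℝ) : ℝ → ℝ → ℝ → ℝ :=
  fun t x y => deriv (fun x' => f t x' y) x

/-- Partial derivative in `y` for a real function `f(t, x, y)`. -/
noncomputable def dY (f : ℝ → ℝ → ℝ → ℝ) : ℝ → ℝ → ℝ → ℝ :=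
  fun t x y => deriv (fun y' => f t x y') y

/-! With `s = n₁ x + n₂ y`, every `∂ₓ` of a plane wave is `n₁ ∂ₛ` and every `∂ᵧ` is `n₂ ∂ₛ`;
this needs no smoothness, because `deriv` commutes with affine changes of variable. The
right-hand side of the Novikov–Veselov equation therefore collapses to
`κ (-Q_sss + 6 Q Q_s) + 3β Q_s` with `κ = n₁³ - 3 n₁ n₂² = cos 3α`, and `κ ≠ 0` forces
`n₁ ≠ 0`, so that `s` ranges over all of `ℝ`. -/

def planeWave (a b : ℝ) (F : ℝ → ℝ → ℝ) : ℝ → ℝ → ℝ → ℝ :=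
  fun t x y => F t (a * x + b * y)

theorem deriv_comp_mul_add_const (f : ℝ → ℝ) (a c x : ℝ) :
    deriv (fun x => f (a * x + c)) x = a * deriv f (a * x + c) :=
  (deriv_comp_mul_left a (fun u => f (u + c)) x).trans
    (by rw [deriv_comp_add_const, smul_eq_mul])

theorem deriv_comp_const_add_mul (f : ℝ → ℝ) (a c x : ℝ) :
    deriv (fun x => f (c + a * x)) x = a * deriv f (c + a * x) := by
  simpa only [add_comm c] using deriv_comp_mul_add_const f a c x

theorem deriv_sub_const_mul_const_mul_add_const {f : ℝ → ℝ} {s : ℝ}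
    (hf : DifferentiableAt ℝ f s) (E k c : ℝ) :
    deriv (fun s => (f s - E) * (k * f s + c)) s = (2 * k * f s + c - k * E) * deriv f s :=
  ((hf.hasDerivAt.sub_const E).mul ((hf.hasDerivAt.const_mul k).add_const c)).deriv.trans
    (by ring)

section planeWave

variable (a b : ℝ) (F : ℝ → ℝ → ℝ)

theorem dX_planeWave : dX (planeWave a b F) = planeWave a b fun t s => a * deriv (F t) s := by
  funext t x y
  exact deriv_comp_mul_add_const (F t) a (b * y) x

theorem dY_planeWave : dY (planeWave a b F) = planeWave a b fun t s => b * deriv (F t) s := by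
  funext t x y
  exact deriv_comp_const_add_mul (F t) b (a * x) y

theorem forall_iff_forall_mul_add_mul {a : ℝ} (ha : a ≠ 0) (P : ℝ → Prop) :
    (∀ s, P s) ↔ ∀ x y, P (a * x + b * y) :=
  ⟨fun h _ _ => h _, fun h s => by simpa [mul_div_cancel₀ s ha] using h (s / a) 0⟩

end planeWave

theorem novikovVeselov_rhs_planeWave (a b c₁ c₂ E : ℝ) {Q : ℝ → ℝ → ℝ}
    (hQ : ∀ t, Differentiable ℝ (Q t)) {q u₁ u₂ : ℝ → ℝ → ℝ → ℝ} (hq : q = planeWave a b Q)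
    (hu₁ : u₁ = fun t x y => (a ^ 2 - b ^ 2) * q t x y + c₁)
    (hu₂ : u₂ = fun t x y => -(2 * a * b) * q t x y + c₂) (t x y : ℝ) :
    - dX (dX (dX q)) t x y + 3 * dX (dY (dY q)) t x y
        + 3 * dX (fun t x y => (q t x y - E) * u₁ t x y) t x y
        + 3 * dY (fun t x y => (q t x y - E) * u₂ t x y) t x y
      = (a ^ 3 - 3 * a * b ^ 2) * (- iteratedDeriv 3 (Q t) (a * x + b * y)
          + 6 * Q t (a * x + b * y) * deriv (Q t) (a * x + b * y))
        + 3 * (-(a ^ 3 - 3 * a * b ^ 2) * E + c₁ * a + c₂ * b) * deriv (Q t) (a * x + b * y) := by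
  subst hq hu₁ hu₂
  have hflux (k c : ℝ) :
      (fun t x y => (planeWave a b Q t x y - E) * (k * planeWave a b Q t x y + c))
        = planeWave a b fun t s => (Q t s - E) * (k * Q t s + c) := rfl
  rw [hflux, hflux]
  simp only [dX_planeWave, dY_planeWave, planeWave, deriv_const_mul_field',
    deriv_sub_const_mul_const_mul_add_const (hQ t _), iteratedDeriv_succ, iteratedDeriv_zero]
  ring

theorem statement7_general (α c₁ c₂ E n₁ n₂ κ β : ℝ)
    (hn₁ : n₁ = Real.cos α) (hn₂ : n₂ = Real.sin α)
    (hκ : κ = Real.cos (3 * α)) (hκ0 : κ ≠ 0)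
    (hβ : β = -κ * E + c₁ * n₁ + c₂ * n₂)
    (Q : ℝ → ℝ → ℝ)
    (hQs : ∀ t, ContDiff ℝ 3 (fun s => Q t s))
    (q u₁ u₂ : ℝ → ℝ → ℝ → ℝ)
    (hq : q = fun t x y => Q t (n₁ * x + n₂ * y))
    (hu₁ : u₁ = fun t x y => (n₁ ^ 2 - n₂ ^ 2) * q t x y + c₁)
    (hu₂ : u₂ = fun t x y => -(2 * n₁ * n₂) * q t x y + c₂) :
    (∀ t x y, 4 * dT q t x y
        = - dX (dX (dX q)) t x y + 3 * dX (dY (dY q)) t x y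
          + 3 * dX (fun t x y => (q t x y - E) * u₁ t x y) t x y
          + 3 * dY (fun t x y => (q t x y - E) * u₂ t x y) t x y)
      ↔ (∀ t s, (4 / κ) * deriv (fun t' => Q t' s) t
          = - iteratedDeriv 3 (fun s' => Q t s') s
            + 6 * Q t s * deriv (fun s' => Q t s') s
            + (3 * β / κ) * deriv (fun s' => Q t s') s) := by
  have hκ_poly : κ = n₁ ^ 3 - 3 * n₁ * n₂ ^ 2 := by
    rw [hκ, Real.cos_three_mul, hn₁, hn₂]
    linear_combination 3 * Real.cos α * Real.sin_sq_add_cos_sq α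
  have hn₁0 : n₁ ≠ 0 := by rintro rfl; simp [hκ_poly] at hκ0
  have hQ t : Differentiable ℝ (Q t) := (hQs t).differentiable (by norm_num)
  have hKdV t s : (4 * deriv (fun t' => Q t' s) t
      = κ * (- iteratedDeriv 3 (Q t) s + 6 * Q t s * deriv (Q t) s) + 3 * β * deriv (Q t) s)
      ↔ (4 / κ) * deriv (fun t' => Q t' s) t
          = - iteratedDeriv 3 (fun s' => Q t s') s + 6 * Q t s * deriv (fun s' => Q t s') s
            + (3 * β / κ) * deriv (fun s' => Q t s') s := by
    constructor <;> intro h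
    · field_simp
      linear_combination h
    · field_simp at h
      linear_combination h
  simp only [novikovVeselov_rhs_planeWave n₁ n₂ c₁ c₂ E hQ hq hu₁ hu₂, ← hκ_poly, ← hβ]
  subst hq
  simp only [dT, hKdV]
  refine forall_congr' fun t => Iff.symm ?_
  exact forall_iff_forall_mul_add_mul n₂ hn₁0 _

/-- A plane wave `q(t,x,y) = Q(t, n₁x + n₂y)` with bounded auxiliary fields
`u₁ = (n₁²−n₂²)q + c₁`, `u₂ = −2n₁n₂q + c₂` solves the Novikov–Veselov equation at
energy `E` iff `Q` solves the KdV-type equation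
`(4/κ)Q_t = −Q_{sss} + 6QQ_s + (3β/κ)Q_s`, where `κ = cos 3α` and
`β = −κE + c₁n₁ + c₂n₂`. -/
theorem statement7 (α c₁ c₂ E n₁ n₂ κ β : ℝ)
    (hn₁ : n₁ = Real.cos α) (hn₂ : n₂ = Real.sin α)
    (hκ : κ = Real.cos (3 * α)) (hκ0 : κ ≠ 0)
    (hβ : β = -κ * E + c₁ * n₁ + c₂ * n₂)
    (Q : ℝ → ℝ → ℝ)
    (hQt : ∀ s, ContDiff ℝ 1 (fun t => Q t s))
    (hQs : ∀ t, ContDiff ℝ 3 (fun s => Q t s))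
    (q u₁ u₂ : ℝ → ℝ → ℝ → ℝ)
    (hq : q = fun t x y => Q t (n₁ * x + n₂ * y))
    (hu₁ : u₁ = fun t x y => (n₁ ^ 2 - n₂ ^ 2) * q t x y + c₁)
    (hu₂ : u₂ = fun t x y => -(2 * n₁ * n₂) * q t x y + c₂) :
    (∀ t x y, 4 * dT q t x y
        = - dX (dX (dX q)) t x y + 3 * dX (dY (dY q)) t x y
          + 3 * dX (fun t x y => (q t x y - E) * u₁ t x y) t x y
          + 3 * dY (fun t x y => (q t x y - E) * u₂ t x y) t x y)
      ↔ (∀ t s, (4 / κ) * deriv (fun t' => Q t' s) t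
          = - iteratedDeriv 3 (fun s' => Q t s') s
            + 6 * Q t s * deriv (fun s' => Q t s') s
            + (3 * β / κ) * deriv (fun s' => Q t s') s) :=
  statement7_general α c₁ c₂ E n₁ n₂ κ β hn₁ hn₂ hκ hκ0 hβ Q hQs q u₁ u₂ hq hu₁ hu₂
end

section
/- Let f : [0, ∞) → ℝ be given by f(r) = −(1/2)·cosh⁻²((r − 20)/2). There is no continuously differentiable function u : [0, ∞) → ℝ with u(r) > 0 for all r ≥ 0 satisfying the integral identity r·u'(r) = ∫₀^r s·f(s)·u(s) ds for all r ≥ 0. (This identity is the radial form of Δu = f·u with u'(0) = 0; consequently the 'KdV ring' potential q₀(x, y) = f(√(x² + y²)) admits no positive radially symmetric solution of Δu = q₀u and is not of conductivity type.) -/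
/-!
Since `f < 0` and `u > 0`, the flux `r u'(r) = ∫₀^r s f(s) u(s) ds` is decreasing in `r`, so
`r u'(r) ≤ c := ∫₀^1 s f(s) u(s) ds < 0` for `r ≥ 1`. Integrating `u' ≤ c / r` gives
`u(r) ≤ u(1) + c log r → -∞`, contradicting positivity.
-/

open Set Real intervalIntegral

lemma integral_le_integral_of_nonpos_on {g : ℝ → ℝ} {a b c : ℝ} (hab : a ≤ b) (hbc : b ≤ c)
    (hg : ContinuousOn g (Icc a c)) (hg_nonpos : ∀ s ∈ Icc a c, g s ≤ 0) :
    ∫ s in a..c, g s ≤ ∫ s in a..b, g s := by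
  have hint : IntervalIntegrable (fun s => -g s) MeasureTheory.volume a c :=
    (hg.intervalIntegrable_of_Icc (hab.trans hbc)).neg
  have hmono : ∫ s in a..b, -g s ≤ ∫ s in a..c, -g s := by
    refine integral_mono_interval le_rfl hab hbc ?_ hint
    refine MeasureTheory.ae_restrict_of_forall_mem measurableSet_Ioc fun s hs => ?_
    simpa using hg_nonpos s (Ioc_subset_Icc_self hs)
  simpa only [integral_neg, neg_le_neg_iff] using hmono

lemma integral_neg_of_neg_on_Ioo {g : ℝ → ℝ} {a b : ℝ} (hab : a < b)
    (hg : ContinuousOn g (Icc a b)) (hg_neg : ∀ s ∈ Ioo a b, g s < 0) :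
    ∫ s in a..b, g s < 0 := by
  have hpos : 0 < ∫ s in a..b, -g s :=
    intervalIntegral_pos_of_pos_on (hg.intervalIntegrable_of_Icc hab.le).neg
      (fun s hs => neg_pos.mpr (hg_neg s hs)) hab
  simpa only [integral_neg, neg_pos] using hpos

lemma le_add_mul_log_of_deriv_le_div {u : ℝ → ℝ} {c : ℝ} (hu : ContinuousOn u (Ici 1))
    (hu_diff : ∀ x, 1 < x → DifferentiableAt ℝ u x) (hu' : ∀ x, 1 < x → deriv u x ≤ c / x)
    {r : ℝ} (hr : 1 ≤ r) : u r ≤ u 1 + c * log r := by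
  have hlog_diff : ∀ x : ℝ, 1 < x → DifferentiableAt ℝ (fun x => c * log x) x := fun x hx =>
    (differentiableAt_log (by positivity)).const_mul c
  have hanti : AntitoneOn (fun x => u x - c * log x) (Ici 1) := by
    refine antitoneOn_of_deriv_nonpos (convex_Ici 1) ?_ ?_ ?_
    · exact hu.sub (continuousOn_const.mul
        (continuousOn_log.mono fun x (hx : 1 ≤ x) => (one_pos.trans_le hx).ne'))
    · rw [interior_Ici]
      exact fun x (hx : 1 < x) => ((hu_diff x hx).sub (hlog_diff x hx)).differentiableWithinAt
    · rw [interior_Ici]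
      intro x (hx : 1 < x)
      rw [deriv_fun_sub (hu_diff x hx) (hlog_diff x hx), deriv_const_mul _
        (differentiableAt_log (by positivity)), deriv_log, ← div_eq_mul_inv]
      linarith [hu' x hx]
  have := hanti (mem_Ici.mpr le_rfl) (mem_Ici.mpr hr) hr
  simp only [log_one, mul_zero, sub_zero] at this
  linarith

theorem not_exists_pos_radial_solution_of_neg {f : ℝ → ℝ} (hf : Continuous f)
    (hf_neg : ∀ r, 0 < r → f r < 0) :
    ¬ ∃ u : ℝ → ℝ,
        ContDiffOn ℝ 1 u (Ici (0 : ℝ))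
        ∧ (∀ r ∈ Ici (0 : ℝ), 0 < u r)
        ∧ (∀ r ∈ Ici (0 : ℝ), r * derivWithin u (Ici 0) r = ∫ s in (0 : ℝ)..r, s * f s * u s) := by
  rintro ⟨u, hu, hu_pos, hflux⟩
  set g : ℝ → ℝ := fun s => s * f s * u s
  have hg_cont : ContinuousOn g (Ici 0) :=
    (continuousOn_id.mul hf.continuousOn).mul hu.continuousOn
  have hg_neg : ∀ s, 0 < s → g s < 0 := fun s hs =>
    mul_neg_of_neg_of_pos (mul_neg_of_pos_of_neg hs (hf_neg s hs)) (hu_pos s hs.le)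
  have hg_nonpos : ∀ s, 0 ≤ s → g s ≤ 0 := fun s hs =>
    hs.eq_or_lt.elim (fun h => by simp [g, ← h]) fun h => (hg_neg s h).le
  set c := ∫ s in (0 : ℝ)..1, g s
  have hc : c < 0 := integral_neg_of_neg_on_Ioo one_pos (hg_cont.mono Icc_subset_Ici_self)
    fun s hs => hg_neg s hs.1
  have hu_diff : ∀ x, 0 < x → HasDerivAt u (derivWithin u (Ici 0) x) x := fun x hx =>
    ((hu.differentiableOn one_ne_zero x hx.le).hasDerivWithinAt).hasDerivAt (Ici_mem_nhds hx)
  have hu' : ∀ x, 1 < x → deriv u x ≤ c / x := by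
    intro x hx
    have hx0 : 0 < x := one_pos.trans hx
    have hflux_le : ∫ s in (0 : ℝ)..x, g s ≤ c :=
      integral_le_integral_of_nonpos_on zero_le_one hx.le (hg_cont.mono Icc_subset_Ici_self)
        fun s hs => hg_nonpos s hs.1
    rw [(hu_diff x hx0).deriv, le_div_iff₀ hx0, mul_comm, hflux x hx0.le]
    exact hflux_le
  set r := exp (u 1 / -c)
  have hr : 1 ≤ r :=
    one_le_exp (div_nonneg (hu_pos 1 (mem_Ici.mpr zero_le_one)).le (neg_nonneg.mpr hc.le))
  have hur : u r ≤ u 1 + c * log r :=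
    le_add_mul_log_of_deriv_le_div (hu.continuousOn.mono (Ici_subset_Ici.mpr zero_le_one))
      (fun x hx => (hu_diff x (one_pos.trans hx)).differentiableAt) hu' hr
  have hbound_eq_zero : u 1 + c * log r = 0 := by
    rw [log_exp, mul_div_assoc', div_neg, mul_div_cancel_left₀ _ hc.ne, add_neg_cancel]
  linarith [hu_pos r (zero_le_one.trans hr)]

/-- The 'KdV ring' radial profile `f(r) = −(1/2)·cosh⁻²((r − 20)/2)` admits no positive
`C¹` function `u` on `[0, ∞)` satisfying the radial Schrödinger identity
`r·u'(r) = ∫₀^r s·f(s)·u(s) ds`; hence the corresponding radial potential is not of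
conductivity type. -/
theorem statement10 (f : ℝ → ℝ)
    (hf : f = fun r => -(1 / 2) * (1 / Real.cosh ((r - 20) / 2)) ^ 2) :
    ¬ ∃ u : ℝ → ℝ,
        ContDiffOn ℝ 1 u (Set.Ici (0 : ℝ))
        ∧ (∀ r ∈ Set.Ici (0 : ℝ), 0 < u r)
        ∧ (∀ r ∈ Set.Ici (0 : ℝ),
            r * derivWithin u (Set.Ici (0 : ℝ)) r = ∫ s in (0 : ℝ)..r, s * f s * u s) := by
  subst hf
  refine not_exists_pos_radial_solution_of_neg ?_ fun r _ => ?_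
  · fun_prop (disch := exact fun x => (cosh_pos _).ne')
  · have : 0 < (1 / cosh ((r - 20) / 2)) ^ 2 := by have := cosh_pos ((r - 20) / 2); positivity
    linarith
end

section
/- Let p ∈ [1, ∞) and let u : ℂ → ℂ be entire (complex-differentiable at every point of ℂ). If ∫_ℂ |u(z)|^p dm(z) < ∞ (where dm is Lebesgue measure on ℂ ≅ ℝ²), then u is identically zero. -/
/-! By the mean value property and Jensen's inequality for `t ↦ t ^ p`, `‖u c‖ ^ p` is at most
the average of `‖u‖ ^ p` over every circle about `c`. Integrating in polar coordinates around `c`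
gives `∫ ‖u‖ ^ p ≥ ∫₀^∞ 2π r ‖u c‖ ^ p dr`, which is infinite unless `u c = 0`. -/

open MeasureTheory Metric Real Set
open scoped ENNReal

section

variable {E : Type*} [NormedAddCommGroup E] [NormedSpace ℝ E]

theorem norm_circleAverage_le_circleAverage_norm (f : ℂ → E) (c : ℂ) (R : ℝ) :
    ‖circleAverage f c R‖ ≤ circleAverage (‖f ·‖) c R := by
  rw [circleAverage, circleAverage, norm_smul, smul_eq_mul, Real.norm_of_nonneg (by positivity)]
  gcongr
  exact intervalIntegral.norm_integral_le_integral_norm two_pi_pos.le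

theorem circleAverage_eq_integral_Ioo (f : ℂ → E) (c : ℂ) (R : ℝ) :
    circleAverage f c R = (2 * π)⁻¹ • ∫ θ in Ioo (-π) π, f (circleMap c R θ) := by
  rw [circleAverage_eq_integral_add (-π), intervalIntegral.integral_comp_add_right
    (fun θ => f (circleMap c R θ)), intervalIntegral.integral_of_le (by linarith [pi_pos]),
    integral_Ioc_eq_integral_Ioo]
  ring_nf

end

theorem ConvexOn.map_circleAverage_le {s : Set ℝ} {g : ℝ → ℝ} {f : ℂ → ℝ} {c : ℂ} {R : ℝ}
    (hg : ConvexOn ℝ s g) (hgc : ContinuousOn g s) (hsc : IsClosed s)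
    (hfs : ∀ z ∈ sphere c |R|, f z ∈ s) (hfi : CircleIntegrable f c R)
    (hgi : CircleIntegrable (g ∘ f) c R) :
    g (circleAverage f c R) ≤ circleAverage (g ∘ f) c R := by
  simp only [circleAverage_eq_intervalAverage, uIoc_of_le two_pi_pos.le]
  exact hg.map_set_average_le hgc hsc (by simp [pi_pos]) (by simp [ENNReal.mul_eq_top])
    (Filter.Eventually.of_forall fun θ => hfs _ (circleMap_mem_sphere' c R θ)) hfi.1 hgi.1

theorem Differentiable.norm_rpow_le_circleAverage {E : Type*} [NormedAddCommGroup E]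
    [NormedSpace ℂ E] [CompleteSpace E] {f : ℂ → E} (hf : Differentiable ℂ f) {p : ℝ}
    (hp : 1 ≤ p) (c : ℂ) (R : ℝ) :
    ‖f c‖ ^ p ≤ circleAverage (‖f ·‖ ^ p) c R := by
  have hcont : Continuous (‖f ·‖) := hf.continuous.norm
  calc ‖f c‖ ^ p = ‖circleAverage f c R‖ ^ p := by rw [hf.diffContOnCl.circleAverage]
    _ ≤ circleAverage (‖f ·‖) c R ^ p := by
      gcongr; exact norm_circleAverage_le_circleAverage_norm f c R
    _ ≤ circleAverage (‖f ·‖ ^ p) c R :=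
      (convexOn_rpow hp).map_circleAverage_le
        (continuousOn_id.rpow_const fun _ _ => Or.inr (by linarith)) isClosed_Ici
        (fun z _ => norm_nonneg (f z)) hcont.continuousOn.circleIntegrable'
        (hcont.rpow_const fun _ => Or.inr (by linarith)).continuousOn.circleIntegrable'

theorem circleMap_eq_add_polarCoord_symm (c : ℂ) (r θ : ℝ) :
    circleMap c r θ = c + Complex.polarCoord.symm (r, θ) := by
  simp [circleMap, Complex.exp_mul_I, ← Complex.ofReal_cos, ← Complex.ofReal_sin]

theorem lintegral_eq_lintegral_Ioi_mul_lintegral_circleMap {f : ℂ → ℝ≥0∞} (hf : Measurable f)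
    (c : ℂ) :
    ∫⁻ z, f z = ∫⁻ r in Ioi 0, ENNReal.ofReal r * ∫⁻ θ in Ioo (-π) π, f (circleMap c r θ) := by
  have hmeas : Measurable fun q : ℝ × ℝ => ENNReal.ofReal q.1 * f (circleMap c q.1 q.2) :=
    (ENNReal.measurable_ofReal.comp measurable_fst).mul (hf.comp circleMap.continuous.measurable)
  calc ∫⁻ z, f z = ∫⁻ z, f (c + z) := ((measurePreserving_add_left volume c).lintegral_comp hf).symm
    _ = ∫⁻ q in Ioi 0 ×ˢ Ioo (-π) π, ENNReal.ofReal q.1 * f (circleMap c q.1 q.2) := by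
      simp_rw [circleMap_eq_add_polarCoord_symm]
      exact (Complex.lintegral_comp_polarCoord_symm _).symm
    _ = _ := by
      rw [Measure.volume_eq_prod, ← Measure.prod_restrict, lintegral_prod _ hmeas.aemeasurable]
      refine lintegral_congr fun r => ?_
      exact lintegral_const_mul (ENNReal.ofReal r) (hf.comp (continuous_circleMap c r).measurable)

theorem lintegral_ofReal_eq_lintegral_Ioi_circleAverage {g : ℂ → ℝ} (hg : Continuous g)
    (hg₀ : 0 ≤ g) (c : ℂ) :
    ∫⁻ z, ENNReal.ofReal (g z) =
      ∫⁻ r in Ioi 0, ENNReal.ofReal (2 * π * r * circleAverage g c r) := by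
  rw [lintegral_eq_lintegral_Ioi_mul_lintegral_circleMap hg.measurable.ennreal_ofReal c]
  refine setLIntegral_congr_fun measurableSet_Ioi fun r hr => ?_
  have hint : IntegrableOn (fun θ => g (circleMap c r θ)) (Ioo (-π) π) :=
    (hg.comp (continuous_circleMap c r)).integrableOn_Icc.mono_set Ioo_subset_Icc_self
  rw [← ofReal_integral_eq_lintegral_ofReal hint (Filter.Eventually.of_forall fun θ => hg₀ _),
    ← ENNReal.ofReal_mul (le_of_lt hr), circleAverage_eq_integral_Ioo, smul_eq_mul]
  congr 1
  field_simp

theorem lintegral_Ioi_ofReal_mul_eq_top {a : ℝ} (ha : 0 < a) :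
    ∫⁻ r in Ioi 0, ENNReal.ofReal (a * r) = ∞ := by
  refine eq_top_iff.mpr ?_
  calc ∞ = ∫⁻ _ in Ioi 1, ENNReal.ofReal a := by
        rw [setLIntegral_const, Real.volume_Ioi, ENNReal.mul_top (by simpa using ha)]
    _ ≤ ∫⁻ r in Ioi 1, ENNReal.ofReal (a * r) :=
        setLIntegral_mono' measurableSet_Ioi fun r hr =>
          ENNReal.ofReal_le_ofReal (le_mul_of_one_le_right ha.le (le_of_lt hr))
    _ ≤ ∫⁻ r in Ioi 0, ENNReal.ofReal (a * r) := lintegral_mono_set (Ioi_subset_Ioi zero_le_one)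

/-- An entire function belonging to `L^p(ℂ)` for some `p ∈ [1, ∞)` vanishes
identically. -/
theorem statement13 (p : ℝ) (hp : 1 ≤ p) (u : ℂ → ℂ)
    (hu : ∀ z : ℂ, DifferentiableAt ℂ u z)
    (hint : Integrable (fun z : ℂ => ‖u z‖ ^ p) volume) :
    ∀ z : ℂ, u z = 0 := by
  intro c
  by_contra hc
  have hu : Differentiable ℂ u := hu
  have hpos : 0 < 2 * π * ‖u c‖ ^ p := by
    have := norm_pos_iff.mpr hc
    positivity
  have hcont : Continuous fun z => ‖u z‖ ^ p :=
    hu.continuous.norm.rpow_const fun _ => Or.inr (by linarith)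
  refine hint.lintegral_lt_top.ne (eq_top_iff.mpr ?_)
  calc ∞ = ∫⁻ r in Ioi 0, ENNReal.ofReal (2 * π * ‖u c‖ ^ p * r) :=
        (lintegral_Ioi_ofReal_mul_eq_top hpos).symm
    _ ≤ ∫⁻ r in Ioi 0, ENNReal.ofReal (2 * π * r * circleAverage (‖u ·‖ ^ p) c r) :=
        setLIntegral_mono' measurableSet_Ioi fun r hr => ENNReal.ofReal_le_ofReal <|
          (mul_right_comm _ _ r).trans_le <| mul_le_mul_of_nonneg_left
            (hu.norm_rpow_le_circleAverage hp c r) (mul_nonneg two_pi_pos.le (le_of_lt hr))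
    _ = ∫⁻ z, ENNReal.ofReal (‖u z‖ ^ p) :=
        (lintegral_ofReal_eq_lintegral_Ioi_circleAverage hcont (fun z => by positivity) c).symm
end
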